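/- Let s, t ∈ ℂ and let S_n denote the continuous dual Hahn polynomial with first parameter 1/2: S_n(x² | 1/2, s, t) = (1/2+s)_n (1/2+t)_n · Σ_{k=0}^{n} [(−n)_k / ((1/2+s)_k (1/2+t)_k k!)] · ∏_{j=0}^{k−1} ((1/2+j)² + x²), a polynomial in x². Define the operator P̃ acting on functions g : ℂ → ℂ by (P̃g)(x) = −(1/(4ix))·[(t−ix)(s−ix)g(x+i) − (s+ix)(t+ix)g(x−i)]. Then for every n ∈ ℕ and every x ∈ ℂ with x ≠ 0, (P̃ S_n(·²|1/2,s,t))(x) = (n + (s+t)/2)·S_n(x²|1/2,s,t), where S_n is evaluated as a polynomial in the square of its argument (so at x±i the argument of the polynomial is (x±i)²). -/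

import Mathlib

/-!
Expand `S_n = ∑ₖ eₖ Bₖ` in the basis `Bₖ(x) = ∏_{j<k} ((1/2 + j)² + x²)`. Since
`B_{k+1}(y) = Bₖ(y) · ((k + 1/2)² + y²)` and the new factor equals `(k + 1/2)² + x² - 1 ± 2ix` at
`y = x ± i`, the difference and the sum of the two shifted terms of `P̃` on `B_{k+1}` are obtained
from those on `Bₖ`; a joint induction gives the lowering action
`P̃ Bₖ = (k + (s+t)/2) Bₖ - k (s + k - 1/2) (t + k - 1/2) B_{k-1}`.
The coefficients satisfy `(k+1)(1/2 + s + k)(1/2 + t + k) e_{k+1} = (k - n) eₖ`, so the lowering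
terms shift each `k + (s+t)/2` to the common eigenvalue `n + (s+t)/2`.
-/

noncomputable section

open Complex

/-- The continuous dual Hahn polynomial S_n(x² | 1/2, s, t), as a function of x. -/
def cdHahn (n : ℕ) (s t x : ℂ) : ℂ :=
  (ascPochhammer ℂ n).eval (1 / 2 + s) * (ascPochhammer ℂ n).eval (1 / 2 + t) *
    ∑ k ∈ Finset.range (n + 1),
      ((ascPochhammer ℂ k).eval (-(n : ℂ)) /
          ((ascPochhammer ℂ k).eval (1 / 2 + s) * (ascPochhammer ℂ k).eval (1 / 2 + t) *
            (Nat.factorial k : ℂ))) *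
        ∏ j ∈ Finset.range k, ((1 / 2 + (j : ℂ)) ^ 2 + x ^ 2)

open Finset Polynomial

theorem ascPochhammer_eval_ne_zero_of_le {R : Type*} [CommSemiring R] {a : R} {m n : ℕ}
    (h : (ascPochhammer R n).eval a ≠ 0) (hmn : m ≤ n) : (ascPochhammer R m).eval a ≠ 0 := by
  obtain ⟨k, rfl⟩ := Nat.exists_eq_add_of_le hmn
  rw [← ascPochhammer_mul, eval_mul] at h
  exact left_ne_zero_of_mul h

def hahnBasis (x : ℂ) (k : ℕ) : ℂ := ∏ j ∈ range k, ((1 / 2 + (j : ℂ)) ^ 2 + x ^ 2)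

theorem hahnBasis_succ (x : ℂ) (k : ℕ) :
    hahnBasis x (k + 1) = hahnBasis x k * ((1 / 2 + (k : ℂ)) ^ 2 + x ^ 2) :=
  prod_range_succ _ _

def hahnCoeff (n : ℕ) (s t : ℂ) (k : ℕ) : ℂ :=
  (ascPochhammer ℂ n).eval (1 / 2 + s) * (ascPochhammer ℂ n).eval (1 / 2 + t) *
    ((ascPochhammer ℂ k).eval (-(n : ℂ)) /
      ((ascPochhammer ℂ k).eval (1 / 2 + s) * (ascPochhammer ℂ k).eval (1 / 2 + t) *
        (k.factorial : ℂ)))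

theorem cdHahn_eq_sum (n : ℕ) (s t x : ℂ) :
    cdHahn n s t x = ∑ k ∈ range (n + 1), hahnCoeff n s t k * hahnBasis x k := by
  simp only [cdHahn, hahnCoeff, hahnBasis, mul_sum, mul_assoc]

theorem hahnCoeff_succ_mul {n k : ℕ} (hk : k < n) (s t : ℂ) :
    hahnCoeff n s t (k + 1) * ((k + 1) * (1 / 2 + s + k) * (1 / 2 + t + k))
      = hahnCoeff n s t k * (k - n) := by
  -- A vanishing prefactor kills every coefficient (the junk divisions are then harmless);
  -- otherwise no denominator up to index `k + 1` vanishes.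
  by_cases hpre : (ascPochhammer ℂ n).eval (1 / 2 + s) * (ascPochhammer ℂ n).eval (1 / 2 + t) = 0
  · simp only [hahnCoeff, hpre, zero_mul]
  have hs := ascPochhammer_eval_ne_zero_of_le (left_ne_zero_of_mul hpre) hk
  have ht := ascPochhammer_eval_ne_zero_of_le (right_ne_zero_of_mul hpre) hk
  rw [ascPochhammer_succ_eval, mul_ne_zero_iff] at hs ht
  obtain ⟨hs, hs'⟩ := hs
  obtain ⟨ht, ht'⟩ := ht
  have hfac : (k.factorial : ℂ) ≠ 0 := Nat.cast_ne_zero.mpr k.factorial_ne_zero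
  simp only [hahnCoeff, ascPochhammer_succ_eval, Nat.factorial_succ]
  push_cast
  -- `field_simp` would split `1 / 2 + s + k` and no longer see that it is nonzero.
  generalize (1 / 2 + s + (k : ℂ)) = p at hs' ⊢
  generalize (1 / 2 + t + (k : ℂ)) = q at ht' ⊢
  field_simp
  ring

-- `P̃ g x = -(1 / (4 * I * x)) * shiftDiff s t g x`.
def shiftDiff (s t : ℂ) (g : ℂ → ℂ) (x : ℂ) : ℂ :=
  (t - I * x) * (s - I * x) * g (x + I) - (s + I * x) * (t + I * x) * g (x - I)

def shiftSum (s t : ℂ) (g : ℂ → ℂ) (x : ℂ) : ℂ :=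
  (t - I * x) * (s - I * x) * g (x + I) + (s + I * x) * (t + I * x) * g (x - I)

theorem shiftDiff_sum {ι : Type*} (s t : ℂ) (F : Finset ι) (e : ι → ℂ) (f : ι → ℂ → ℂ) (x : ℂ) :
    shiftDiff s t (fun y => ∑ k ∈ F, e k * f k y) x = ∑ k ∈ F, e k * shiftDiff s t (f k) x := by
  simp only [shiftDiff, mul_sum, ← sum_sub_distrib]
  exact sum_congr rfl fun k _ => by ring

theorem shiftDiff_mul_sq_add (s t a : ℂ) (g : ℂ → ℂ) (x : ℂ) :
    shiftDiff s t (fun y => g y * (a ^ 2 + y ^ 2)) x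
      = (a ^ 2 + x ^ 2 - 1) * shiftDiff s t g x + 2 * I * x * shiftSum s t g x := by
  simp only [shiftDiff, shiftSum]
  linear_combination ((t - I * x) * (s - I * x) * g (x + I)
    - (s + I * x) * (t + I * x) * g (x - I)) * I_sq

theorem shiftSum_mul_sq_add (s t a : ℂ) (g : ℂ → ℂ) (x : ℂ) :
    shiftSum s t (fun y => g y * (a ^ 2 + y ^ 2)) x
      = (a ^ 2 + x ^ 2 - 1) * shiftSum s t g x + 2 * I * x * shiftDiff s t g x := by
  simp only [shiftDiff, shiftSum]
  linear_combination ((t - I * x) * (s - I * x) * g (x + I)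
    + (s + I * x) * (t + I * x) * g (x - I)) * I_sq

theorem shiftDiff_hahnBasis_zero (s t x : ℂ) :
    shiftDiff s t (hahnBasis · 0) x = -2 * I * x * (s + t) * hahnBasis x 0 := by
  simp only [shiftDiff, hahnBasis, range_zero, prod_empty]
  ring

theorem shiftSum_hahnBasis_zero (s t x : ℂ) :
    shiftSum s t (hahnBasis · 0) x = 2 * (s * t - x ^ 2) * hahnBasis x 0 := by
  simp only [shiftSum, hahnBasis, range_zero, prod_empty]
  linear_combination 2 * x ^ 2 * I_sq

theorem shiftDiff_shiftSum_hahnBasis_succ (s t x : ℂ) (k : ℕ) :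
    shiftDiff s t (hahnBasis · (k + 1)) x
        = -2 * I * x * (s + t + 2 * (k + 1)) * hahnBasis x (k + 1)
          + 4 * I * x * ((k + 1) * (1 / 2 + s + k) * (1 / 2 + t + k)) * hahnBasis x k ∧
      shiftSum s t (hahnBasis · (k + 1)) x
        = 2 * (s * t - x ^ 2 + 2 * (k + 1) * (s + t) + 2 * (k + 1) ^ 2 - (k + 1))
            * hahnBasis x (k + 1)
          - 2 * (2 * k + 1) * ((k + 1) * (1 / 2 + s + k) * (1 / 2 + t + k)) * hahnBasis x k := by
  induction k with
  | zero =>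
    simp only [hahnBasis_succ, shiftDiff_mul_sq_add, shiftSum_mul_sq_add,
      shiftDiff_hahnBasis_zero, shiftSum_hahnBasis_zero]
    push_cast
    constructor
    · ring
    · linear_combination -4 * x ^ 2 * (s + t) * hahnBasis x 0 * I_sq
  | succ k ih =>
    obtain ⟨hD, hS⟩ := ih
    simp only [fun y => hahnBasis_succ y (k + 1), shiftDiff_mul_sq_add, shiftSum_mul_sq_add]
    rw [hahnBasis_succ x k] at hD hS ⊢
    push_cast
    constructor
    · linear_combination ((1 / 2 + (k + 1 : ℂ)) ^ 2 + x ^ 2 - 1) * hD + 2 * I * x * hS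
    · linear_combination ((1 / 2 + (k + 1 : ℂ)) ^ 2 + x ^ 2 - 1) * hS + 2 * I * x * hD
        - 4 * x ^ 2 * ((s + t + 2 * (k + 1)) * ((1 / 2 + k) ^ 2 + x ^ 2)
          - 2 * ((k + 1) * (1 / 2 + s + k) * (1 / 2 + t + k))) * hahnBasis x k * I_sq

theorem shiftDiff_cdHahn (n : ℕ) (s t x : ℂ) :
    shiftDiff s t (cdHahn n s t) x = -2 * I * x * (2 * n + s + t) * cdHahn n s t x := by
  set e := hahnCoeff n s t
  have lowering : ∀ k < n, e (k + 1) * shiftDiff s t (hahnBasis · (k + 1)) x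
      = -2 * I * x * (s + t + 2 * ((k + 1 : ℕ) : ℂ)) * (e (k + 1) * hahnBasis x (k + 1))
        + 4 * I * x * (k - n) * (e k * hahnBasis x k) := fun k hk => by
    rw [(shiftDiff_shiftSum_hahnBasis_succ s t x k).1]
    push_cast
    linear_combination 4 * I * x * hahnBasis x k * hahnCoeff_succ_mul hk s t
  rw [show cdHahn n s t = fun y => ∑ k ∈ range (n + 1), e k * hahnBasis y k from
    funext (cdHahn_eq_sum n s t), shiftDiff_sum, mul_sum]
  calc ∑ k ∈ range (n + 1), e k * shiftDiff s t (hahnBasis · k) x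
      = ∑ k ∈ range n, e (k + 1) * shiftDiff s t (hahnBasis · (k + 1)) x
          + e 0 * shiftDiff s t (hahnBasis · 0) x := sum_range_succ' _ _
    _ = ∑ k ∈ range (n + 1), -2 * I * x * (s + t + 2 * (k : ℂ)) * (e k * hahnBasis x k)
          + ∑ k ∈ range (n + 1), 4 * I * x * (k - n) * (e k * hahnBasis x k) := by
      rw [sum_congr rfl fun k hk => lowering k (mem_range.1 hk), sum_add_distrib,
        sum_range_succ' _ n, sum_range_succ _ n, shiftDiff_hahnBasis_zero]
      push_cast
      ring
    _ = ∑ k ∈ range (n + 1), -2 * I * x * (2 * n + s + t) * (e k * hahnBasis x k) := by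
      rw [← sum_add_distrib]
      exact sum_congr rfl fun k _ => by ring

/-- the operator
(P̃g)(x) = −(1/(4ix))[(t−ix)(s−ix)g(x+i) − (s+ix)(t+ix)g(x−i)] is diagonalized
by the continuous dual Hahn polynomials S_n(x²|1/2,s,t) with eigenvalue
n + (s+t)/2. -/
theorem stmt8 (s t : ℂ) (n : ℕ) (x : ℂ) (hx : x ≠ 0) :
    -(1 / (4 * I * x)) *
        ((t - I * x) * (s - I * x) * cdHahn n s t (x + I)
          - (s + I * x) * (t + I * x) * cdHahn n s t (x - I))
      = ((n : ℂ) + (s + t) / 2) * cdHahn n s t x := by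
  have h := shiftDiff_cdHahn n s t x
  rw [shiftDiff] at h
  rw [h]
  field_simp
  ring
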